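/- Let G be a group, H ≤ G a subgroup containing a central element z of infinite order such that every finite index subgroup of H contains z^8. Fix an integer d ≥ 1 and let Ḡ be a quotient of G in which the image z̄ of z has order exactly d. Then the kernel of any homomorphism from Ḡ to a finite group contains the image of (8ℤ + dℤ)/dℤ inside ⟨z̄⟩ ≅ ℤ/dℤ. In particular, if gcd(8,d) < d then no homomorphism of Ḡ to a finite group is injective on ⟨z̄⟩. -/
import Mathlib


/-- Abstract Toledo–Raghunathan argument.  Let `H ≤ G` contain an element `z`,
central in `H`, of infinite order, such that every finite index subgroup of `H`
contains `z^8`.  Let `Ḡ` be a quotient of `G` in which the image `z̄` of `z` has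
order exactly `d`.  Then the kernel of any homomorphism `φ` from `Ḡ` to a finite
group contains the subgroup `(8ℤ + dℤ)/dℤ` of `⟨z̄⟩ ≅ ℤ/dℤ`, i.e.
`φ (z̄ ^ gcd 8 d) = 1`; in particular if `gcd 8 d < d` then `φ` is not injective
on `⟨z̄⟩`. -/
theorem stmt_10 {G Gbar : Type*} [Group G] [Group Gbar]
    (H : Subgroup G) (z : G) (hzH : z ∈ H)
    (hcent : ∀ h ∈ H, h * z = z * h) (hord : orderOf z = 0)
    (h8 : ∀ K : Subgroup H, K.FiniteIndex → (⟨z, hzH⟩ : H) ^ 8 ∈ K)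
    (π : G →* Gbar) (hπ : Function.Surjective π)
    (d : ℕ) (hd : 0 < d) (hzd : orderOf (π z) = d) :
    ∀ (F : Type*) [Group F] [Finite F] (φ : Gbar →* F),
      φ (π z ^ Nat.gcd 8 d) = 1 ∧
      (Nat.gcd 8 d < d →
        ¬ Function.Injective (φ.comp (Subgroup.zpowers (π z)).subtype)) := by
  intro F _ _ φ
  set ψ : H →* F := (φ.comp π).comp H.subtype with hψ
  have hKfi : ψ.ker.FiniteIndex := ψ.ker.finiteIndex_of_finite_quotient
  have h8mem := h8 ψ.ker hKfi
  have h8' : φ (π z) ^ 8 = 1 := by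
    have := h8mem
    rw [MonoidHom.mem_ker] at this
    simpa [hψ, map_pow] using this
  have hd' : φ (π z) ^ d = 1 := by
    rw [← map_pow, ← hzd, pow_orderOf_eq_one, map_one]
  have hdvd : orderOf (φ (π z)) ∣ Nat.gcd 8 d :=
    Nat.dvd_gcd (orderOf_dvd_of_pow_eq_one h8') (orderOf_dvd_of_pow_eq_one hd')
  have key : φ (π z ^ Nat.gcd 8 d) = 1 := by
    rw [map_pow]; exact orderOf_dvd_iff_pow_eq_one.mp hdvd
  refine ⟨key, fun hlt hinj => ?_⟩
  have hmem : π z ^ Nat.gcd 8 d ∈ Subgroup.zpowers (π z) := by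
    exact pow_mem (Subgroup.mem_zpowers _) _
  have : (⟨π z ^ Nat.gcd 8 d, hmem⟩ : Subgroup.zpowers (π z)) = 1 := by
    apply hinj
    simpa using key
  have hone : π z ^ Nat.gcd 8 d = 1 := congrArg Subtype.val this
  have : d ∣ Nat.gcd 8 d := by
    have h := orderOf_dvd_of_pow_eq_one hone
    rwa [hzd] at h
  exact absurd (Nat.le_of_dvd (Nat.gcd_pos_of_pos_right 8 hd) this) (not_le.mpr hlt)
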